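/- arXiv:2002.03965 — 6 statements merged into one kernel-verified Lean document; each statement's English description precedes it below -/
import Mathlib

section
/- For any palindrome w and any p with 1 ≤ p ≤ |w|, the following are equivalent: (1) p is a period of w; (2) there exist palindromes u, v with |u·v| = p such that w = (u·v)^k · u for some k ≥ 1; (3) the suffix w[p..|w|-1] obtained by deleting the first p letters of w is a palindrome. -/
/-- `p` is a period of `w`: letters at distance `p` agree. -/
def HasPeriod {α : Type*} (w : List α) (p : ℕ) : Prop :=
  ∀ i : ℕ, i + p < w.length → w[i]? = w[i + p]?

/-- The minimal period of `w`. -/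
noncomputable def minPeriod {α : Type*} (w : List α) : ℕ :=
  sInf {p : ℕ | 0 < p ∧ HasPeriod w p}

/-- `k`-th power of a list: `k` concatenated copies of `w`. -/
def listPow {α : Type*} (w : List α) (k : ℕ) : List α := (List.replicate k w).flatten

/-- `s` admits a factorization into exactly `k` nonempty palindromes. -/
def HasPalFact {α : Type*} (s : List α) (k : ℕ) : Prop :=
  ∃ L : List (List α), L.length = k ∧ L.flatten = s ∧ ∀ w ∈ L, w ≠ [] ∧ w.reverse = w

/-- Palindromic length: minimum number of nonempty palindromic factors (`pl ε = 0`). -/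
noncomputable def pl {α : Type*} (s : List α) : ℕ := sInf {k : ℕ | HasPalFact s k}

/-- `plParity j s` : minimum `k ≡ j (mod 2)` with a palindromic `k`-factorization, `⊤` if none. -/
noncomputable def plParity {α : Type*} (j : ℕ) (s : List α) : ℕ∞ :=
  sInf {n : ℕ∞ | ∃ k : ℕ, n = (k : ℕ∞) ∧ k % 2 = j ∧ HasPalFact s k}

/-- The set of nonempty palindromic suffixes of `s` with minimal period exactly `p`
(the `p`-series of `s`). -/
def pSeries {α : Type*} (s : List α) (p : ℕ) : Set (List α) :=
  {w | w <:+ s ∧ w ≠ [] ∧ w.reverse = w ∧ minPeriod w = p}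

/-!
A word has period `p` exactly when deleting its first `p` letters leaves a prefix of it. For a
palindrome `w` the reversal of that suffix is the prefix of the same length, which gives (1) ⇔ (3).
A word of period `p` is `x^k u` with `x` its first `p` letters and `u` a prefix of `x`. Writing
`x = u v`, the last `p` letters of `w` are `v u`; as `w` is a palindrome, they are the reversal of
its first `p` letters `u v`, which forces `u` and `v` to be palindromes.
-/

section

variable {α : Type*}

theorem listPow_succ (x : List α) (k : ℕ) : listPow x (k + 1) = listPow x k ++ x := by
  rw [listPow, listPow, List.replicate_succ', List.flatten_append, List.flatten_singleton]

theorem listPow_succ' (x : List α) (k : ℕ) : listPow x (k + 1) = x ++ listPow x k := by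
  rw [listPow, listPow, List.replicate_succ, List.flatten_cons]

theorem length_listPow (x : List α) (k : ℕ) : (listPow x k).length = k * x.length := by
  simp [listPow]

theorem getElem?_listPow (x : List α) {k i : ℕ} (hi : i < k * x.length) :
    (listPow x k)[i]? = x[i % x.length]? := by
  induction k generalizing i with
  | zero => simp at hi
  | succ k ih =>
    rw [listPow_succ']
    by_cases hix : i < x.length
    · rw [List.getElem?_append_left hix, Nat.mod_eq_of_lt hix]
    · rw [List.getElem?_append_right (by omega), ih (by rw [Nat.succ_mul] at hi; omega),
        ← Nat.mod_eq_sub_mod (by omega)]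

theorem hasPeriod_iff_drop_eq_take {w : List α} {p : ℕ} :
    HasPeriod w p ↔ w.drop p = w.take (w.length - p) := by
  refine ⟨fun h => List.ext_getElem? fun i => ?_, fun h i hi => ?_⟩
  · by_cases hi : i + p < w.length
    · rw [List.getElem?_drop, List.getElem?_take_of_lt (by omega), add_comm, h i hi]
    · rw [List.getElem?_eq_none (by simp; omega), List.getElem?_eq_none (by simp; omega)]
  · rw [add_comm, ← List.getElem?_drop, h, List.getElem?_take_of_lt (by omega)]

theorem hasPeriod_iff_drop_prefix {w : List α} {p : ℕ} : HasPeriod w p ↔ w.drop p <+: w := by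
  rw [hasPeriod_iff_drop_eq_take, List.prefix_iff_eq_take, List.length_drop]

theorem HasPeriod.getElem?_mod {w : List α} {p : ℕ} (h : HasPeriod w p) {i : ℕ}
    (hi : i < w.length) : w[i]? = w[i % p]? := by
  rcases Nat.eq_zero_or_pos p with rfl | hp
  · rw [Nat.mod_zero]
  induction i using Nat.strong_induction_on with
  | _ i ih =>
    by_cases hip : i < p
    · rw [Nat.mod_eq_of_lt hip]
    · rw [Nat.mod_eq_sub_mod (by omega), ← ih (i - p) (by omega) (by omega),
        h (i - p) (by omega), Nat.sub_add_cancel (by omega)]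

theorem HasPeriod.eq_listPow_append {w : List α} {p : ℕ} (h : HasPeriod w p) :
    w = listPow (w.take p) (w.length / p) ++ w.take (w.length % p) := by
  have hdiv := Nat.div_add_mod' w.length p
  generalize hq : w.length / p = q at hdiv ⊢
  have hqp : q * p ≤ w.length := Nat.le.intro hdiv
  have hlen : (listPow (w.take p) q).length = q * p := by
    rw [length_listPow, List.length_take]
    rcases le_or_gt p w.length with hpn | hnp
    · rw [min_eq_left hpn]
    · simp [← hq, Nat.div_eq_of_lt hnp]
  refine List.ext_getElem? fun i => ?_
  by_cases hi : i < q * p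
  · have hq0 : 0 < q := Nat.pos_of_ne_zero (by rintro h0; simp [h0] at hi)
    have hp0 : 0 < p := Nat.pos_of_ne_zero (by rintro rfl; simp at hi)
    have hpq : p ≤ q * p := Nat.le_mul_of_pos_left p hq0
    have hx : (w.take p).length = p := List.length_take_of_le (hpq.trans hqp)
    rw [List.getElem?_append_left (hlen ▸ hi), getElem?_listPow _ (by rwa [hx]), hx,
      List.getElem?_take_of_lt (Nat.mod_lt _ hp0), h.getElem?_mod (hi.trans_le hqp)]
  · rw [List.getElem?_append_right (by omega), hlen]
    by_cases hin : i < w.length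
    · rw [List.getElem?_take_of_lt (by omega), h.getElem?_mod hin,
        h.getElem?_mod (i := i - q * p) (by omega), mul_comm,
        Nat.sub_mul_mod (by rw [mul_comm]; exact not_lt.mp hi)]
    · rw [List.getElem?_eq_none (by omega), List.getElem?_eq_none (by simp; omega)]

theorem hasPeriod_listPow_append {x u : List α} (hu : u <+: x) (k : ℕ) :
    HasPeriod (listPow x k ++ u) x.length := by
  rw [hasPeriod_iff_drop_prefix]
  cases k with
  | zero => simp [listPow, List.drop_eq_nil_of_le hu.length_le]
  | succ k =>
    rw [listPow_succ', List.append_assoc, List.drop_left, ← List.append_assoc, ← listPow_succ',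
      listPow_succ, List.append_assoc]
    exact List.prefix_append_right_inj _ |>.mpr (hu.trans (List.prefix_append x u))

theorem reverse_eq_of_reverse_listPow_append {u v : List α} {k : ℕ} (hk : k ≠ 0)
    (hw : (listPow (u ++ v) k ++ u).reverse = listPow (u ++ v) k ++ u) :
    u.reverse = u ∧ v.reverse = v := by
  obtain ⟨k, rfl⟩ := Nat.exists_eq_succ_of_ne_zero hk
  have hpre : u ++ v <+: listPow (u ++ v) (k + 1) ++ u := by
    rw [listPow_succ', List.append_assoc]
    exact List.prefix_append _ _
  have hsuf : v ++ u <:+ listPow (u ++ v) (k + 1) ++ u := by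
    rw [listPow_succ]
    simpa only [List.append_assoc] using List.suffix_append (listPow (u ++ v) k ++ u) (v ++ u)
  have hrev : (v ++ u).reverse = u ++ v :=
    (List.prefix_of_prefix_length_le (hw ▸ hsuf.reverse) hpre (by simp)).eq_of_length
      (by simp)
  rw [List.reverse_append] at hrev
  exact List.append_inj hrev List.length_reverse

theorem HasPeriod.exists_palindrome_factorization {w : List α} {p : ℕ} (h : HasPeriod w p)
    (hw : w.reverse = w) (hp : 0 < p) (hpn : p ≤ w.length) :
    ∃ (u v : List α) (k : ℕ), 1 ≤ k ∧ u.reverse = u ∧ v.reverse = v ∧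
      (u ++ v).length = p ∧ w = listPow (u ++ v) k ++ u := by
  set u := (w.take p).take (w.length % p)
  set v := (w.take p).drop (w.length % p)
  have huv : u ++ v = w.take p := List.take_append_drop _ _
  have hw' : w = listPow (u ++ v) (w.length / p) ++ u := by
    rw [huv]
    simpa only [u, List.take_take, min_eq_left (Nat.mod_lt _ hp).le] using h.eq_listPow_append
  have hk : w.length / p ≠ 0 := (Nat.div_pos hpn hp).ne'
  obtain ⟨hu, hv⟩ := reverse_eq_of_reverse_listPow_append hk (hw' ▸ hw)
  refine ⟨u, v, _, Nat.one_le_iff_ne_zero.mpr hk, hu, hv, ?_, hw'⟩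
  rw [huv, List.length_take_of_le hpn]

theorem reverse_drop_eq_iff_hasPeriod {w : List α} {p : ℕ} (hw : w.reverse = w) :
    (w.drop p).reverse = w.drop p ↔ HasPeriod w p := by
  rw [hasPeriod_iff_drop_eq_take, List.reverse_drop, hw, eq_comm]

end

/-- for a palindrome `w` and `1 ≤ p ≤ |w|`, the conditions
(1) `p` is a period of `w`, (2) `w = (uv)^k u` for palindromes `u,v` with `|uv| = p`, `k ≥ 1`,
(3) `w` with its first `p` letters deleted is a palindrome, are all equivalent. -/
theorem palindrome_period_iff {α : Type*} (w : List α) (p : ℕ)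
    (hw : w.reverse = w) (hp1 : 1 ≤ p) (hp2 : p ≤ w.length) :
    (HasPeriod w p ↔ ∃ (u v : List α) (k : ℕ), 1 ≤ k ∧ u.reverse = u ∧ v.reverse = v ∧
        (u ++ v).length = p ∧ w = listPow (u ++ v) k ++ u) ∧
    (HasPeriod w p ↔ (w.drop p).reverse = w.drop p) := by
  refine ⟨⟨fun h => h.exists_palindrome_factorization hw hp1 hp2, ?_⟩,
    (reverse_drop_eq_iff_hasPeriod hw).symm⟩
  rintro ⟨u, v, k, -, -, -, rfl, rfl⟩
  exact hasPeriod_listPow_append (List.prefix_append u v) k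
end

section
/- Any palindromic factorization of a string s into k nonempty palindromic factors with k ≤ |s| - 2 can be transformed into a palindromic factorization of s into k+2 nonempty palindromic factors. Consequently, s admits a factorization into exactly k nonempty palindromes if and only if the minimum number of factors of the same parity as k in a palindromic factorization of s is at most k. -/
/-! Since a palindrome `x :: u ++ [x]` splits as `[x] · u · [x]`, a palindrome of length `n`
factors into every odd number `≤ n` of palindromes. So a palindromic `k`-factorization of `s`
refines to a `j`-factorization for every `k ≤ j ≤ |s|` with `j ≡ k (mod 2)`: peel off the
first factor `w`; either the rest `s'` takes `j - 1` factors by induction, or `j = |s|` and `s`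
is cut into letters, or `s'` takes `|s'|` or `|s'| - 1` factors and `w` the remaining odd
number. -/

section

variable {α : Type*}

namespace HasPalFact

theorem of_palindrome {w : List α} (hne : w ≠ []) (hw : w.reverse = w) : HasPalFact w 1 :=
  ⟨[w], rfl, List.flatten_singleton, by simpa using ⟨hne, hw⟩⟩

theorem length_self (s : List α) : HasPalFact s s.length := by
  refine ⟨s.map fun a => [a], by simp, ?_, by simp⟩
  induction s <;> simp_all

theorem append {u v : List α} {m n : ℕ} (hu : HasPalFact u m) (hv : HasPalFact v n) :
    HasPalFact (u ++ v) (m + n) := by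
  obtain ⟨L, rfl, rfl, hL⟩ := hu
  obtain ⟨M, rfl, rfl, hM⟩ := hv
  refine ⟨L ++ M, List.length_append, List.flatten_append, ?_⟩
  simp only [List.mem_append]
  rintro w (hw | hw)
  exacts [hL w hw, hM w hw]

theorem le_length {s : List α} {k : ℕ} (h : HasPalFact s k) : k ≤ s.length := by
  obtain ⟨L, rfl, rfl, hL⟩ := h
  simpa [List.length_flatten] using List.length_le_sum_of_one_le (L.map List.length)
    (by simpa [Nat.one_le_iff_ne_zero] using fun w hw => (hL w hw).1)

end HasPalFact

theorem List.Palindrome.hasPalFact_of_odd {w : List α} (hw : w.Palindrome) {j : ℕ}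
    (hj : j ≤ w.length) (hodd : j % 2 = 1) : HasPalFact w j := by
  induction hw generalizing j with
  | nil => simp_all
  | singleton x =>
    obtain rfl : j = 1 := by simp at hj; omega
    exact HasPalFact.of_palindrome (List.cons_ne_nil x []) rfl
  | @cons_concat x u hu ih =>
    rcases Nat.lt_or_ge j 3 with hj3 | hj3
    · obtain rfl : j = 1 := by omega
      exact HasPalFact.of_palindrome (List.cons_ne_nil _ _) (hu.cons_concat x).reverse_eq
    · have hx := HasPalFact.of_palindrome (List.cons_ne_nil x []) rfl
      have hmid := ih (j := j - 2) (by simp at hj; omega) (by omega)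
      have := (hx.append hmid).append hx
      rwa [show 1 + (j - 2) + 1 = j by omega] at this

theorem hasPalFact_flatten_of_le {L : List (List α)} (hL : ∀ w ∈ L, w ≠ [] ∧ w.reverse = w)
    {j : ℕ} (hLj : L.length ≤ j) (hj : j ≤ L.flatten.length) (hpar : j % 2 = L.length % 2) :
    HasPalFact L.flatten j := by
  induction L generalizing j with
  | nil => simpa [show j = 0 by simpa using hj] using HasPalFact.length_self ([] : List α)
  | cons w L ih =>
    obtain ⟨⟨hne, hw⟩, hL⟩ := List.forall_mem_cons.mp hL
    have hw1 : 1 ≤ w.length := List.length_pos_iff.mpr hne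
    have hLs := HasPalFact.le_length ⟨L, rfl, rfl, hL⟩
    simp only [List.flatten_cons, List.length_cons, List.length_append] at hLj hj hpar ⊢
    by_cases hrest : j ≤ L.flatten.length + 1
    · have := (HasPalFact.of_palindrome hne hw).append
        (ih hL (j := j - 1) (by omega) (by omega) (by omega))
      rwa [show 1 + (j - 1) = j by omega] at this
    by_cases hletters : j = w.length + L.flatten.length
    · simpa [hletters] using HasPalFact.length_self (w ++ L.flatten)
    set i := 2 * ((j - L.flatten.length) / 2) + 1
    have hwi := (List.Palindrome.of_reverse_eq hw).hasPalFact_of_odd (j := i) (by omega) (by omega)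
    have hLi : HasPalFact L.flatten (j - i) := by
      rcases (show j - i = L.flatten.length ∨ j - i + 1 = L.flatten.length by omega) with h | h
      · exact h ▸ HasPalFact.length_self _
      · exact ih hL (by omega) (by omega) (by omega)
    have := hwi.append hLi
    rwa [show i + (j - i) = j by omega] at this

theorem HasPalFact.of_le {s : List α} {k j : ℕ} (h : HasPalFact s k) (hkj : k ≤ j)
    (hj : j ≤ s.length) (hpar : j % 2 = k % 2) : HasPalFact s j := by
  obtain ⟨L, rfl, rfl, hL⟩ := h
  exact hasPalFact_flatten_of_le hL hkj hj hpar

theorem plParity_le_iff {s : List α} {j k : ℕ} :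
    plParity j s ≤ k ↔ ∃ k' ≤ k, k' % 2 = j ∧ HasPalFact s k' := by
  rw [plParity, ← ENat.lt_add_one_iff (ENat.natCast_ne_top k), sInf_lt_iff]
  constructor
  · rintro ⟨_, ⟨k', rfl, hpar, h⟩, hlt⟩
    exact ⟨k', Nat.lt_add_one_iff.mp (by exact_mod_cast hlt), hpar, h⟩
  · rintro ⟨k', hle, hpar, h⟩
    exact ⟨k', ⟨k', rfl, hpar, h⟩, by exact_mod_cast Nat.lt_add_one_of_le hle⟩

end

/-- a palindromic `k`-factorization with `k ≤ |s| - 2` extends to a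
`(k+2)`-factorization; consequently (for `k ≤ |s|`, as forced by nonempty factors)
`s` has a palindromic `k`-factorization iff the minimum number of factors of the parity of
`k` in a palindromic factorization of `s` is at most `k`. -/
theorem palFact_extend_and_parity_criterion {α : Type*} (s : List α) :
    (∀ k : ℕ, k + 2 ≤ s.length → HasPalFact s k → HasPalFact s (k + 2)) ∧
    (∀ k : ℕ, k ≤ s.length → (HasPalFact s k ↔ plParity (k % 2) s ≤ (k : ℕ∞))) := by
  refine ⟨fun k hk h => h.of_le (by omega) hk (by omega), fun k hk => ?_⟩
  rw [plParity_le_iff]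
  constructor
  · exact fun h => ⟨k, le_rfl, rfl, h⟩
  · rintro ⟨k', hk'k, hpar, h⟩
    exact h.of_le hk'k hk hpar.symm
end

section
/- If a string s has a palindromic factorization into k nonempty palindromes with k ≤ |s| - 2, then s has a palindromic factorization into k+2 nonempty palindromes. -/
theorem hasPalFact_length {α : Type*} (s : List α) : HasPalFact s s.length :=
  ⟨s.map ([·]), by simp, by induction s <;> simp [*], by simp⟩

theorem hasPalFact_flatten {α : Type*} {L : List (List α)}
    (hL : ∀ w ∈ L, w ≠ [] ∧ w.reverse = w) : HasPalFact L.flatten L.length :=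
  ⟨L, rfl, rfl, hL⟩

theorem hasPalFact_one {α : Type*} {w : List α} (hw : w ≠ []) (hp : w.reverse = w) :
    HasPalFact w 1 :=
  ⟨[w], rfl, by simp, by simpa using ⟨hw, hp⟩⟩

theorem HasPalFact.append_s5 {α : Type*} {s t : List α} {m n : ℕ} (hs : HasPalFact s m)
    (ht : HasPalFact t n) : HasPalFact (s ++ t) (m + n) := by
  obtain ⟨L, rfl, rfl, hL⟩ := hs
  obtain ⟨L', rfl, rfl, hL'⟩ := ht
  refine ⟨L ++ L', by simp, by simp, fun w hw => ?_⟩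
  rcases List.mem_append.mp hw with hw | hw
  exacts [hL w hw, hL' w hw]

theorem hasPalFact_three {α : Type*} {w : List α} (hp : w.reverse = w) (h3 : 3 ≤ w.length) :
    HasPalFact w 3 := by
  cases List.Palindrome.of_reverse_eq hp with
  | nil => simp at h3
  | singleton a => simp at h3
  | @cons_concat a u hu =>
    refine ⟨[[a], u, [a]], rfl, by simp, ?_⟩
    simp only [List.mem_cons, List.not_mem_nil, or_false]
    rintro v (rfl | rfl | rfl)
    · simp
    · exact ⟨by rintro rfl; simp at h3, hu.reverse_eq⟩
    · simp

theorem hasPalFact_add_two_of_three_le_length {α : Type*} {L : List (List α)}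
    (hL : ∀ w ∈ L, w ≠ [] ∧ w.reverse = w) {w : List α} (hw : w ∈ L) (h3 : 3 ≤ w.length) :
    HasPalFact L.flatten (L.length + 2) := by
  obtain ⟨L₁, L₂, rfl⟩ := List.append_of_mem hw
  have h₁ := hasPalFact_flatten fun v hv => hL v (List.mem_append_left _ hv)
  have h₂ := hasPalFact_flatten fun v hv =>
    hL v (List.mem_append_right _ (List.mem_cons_of_mem w hv))
  have := (h₁.append_s5 (hasPalFact_three (hL w hw).2 h3)).append_s5 h₂
  rw [List.flatten_append, List.flatten_cons, ← List.append_assoc, List.length_append,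
    List.length_cons, show L₁.length + (L₂.length + 1) + 2 = L₁.length + 3 + L₂.length by omega]
  exact this

theorem hasPalFact_of_forall_length_le_two {α : Type*} {L : List (List α)}
    (hL : ∀ w ∈ L, w ≠ [] ∧ w.reverse = w) (h2 : ∀ w ∈ L, w.length ≤ 2) {j : ℕ}
    (hLj : L.length ≤ j) (hj : j ≤ L.flatten.length) : HasPalFact L.flatten j := by
  induction L generalizing j with
  | nil => simpa [Nat.le_zero.mp hj] using hasPalFact_length ([] : List α)
  | cons w L ih =>
    obtain rfl | hlt := hj.eq_or_lt
    · exact hasPalFact_length _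
    have hw := h2 w List.mem_cons_self
    simp only [List.length_cons, List.flatten_cons, List.length_append] at hLj hlt
    have hrest := ih (fun v hv => hL v (List.mem_cons_of_mem w hv))
      (fun v hv => h2 v (List.mem_cons_of_mem w hv)) (j := j - 1) (by omega) (by omega)
    have := (hasPalFact_one (hL w List.mem_cons_self).1 (hL w List.mem_cons_self).2).append_s5 hrest
    rwa [List.flatten_cons, show j = 1 + (j - 1) by omega]

/-- a palindromic factorization of `s` into `k` nonempty palindromes with
`k ≤ |s| - 2` yields a palindromic factorization into `k + 2` nonempty palindromes. -/
theorem palFact_add_two {α : Type*} (s : List α) (k : ℕ)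
    (hk : k + 2 ≤ s.length) (h : HasPalFact s k) : HasPalFact s (k + 2) := by
  obtain ⟨L, rfl, rfl, hL⟩ := h
  by_cases hlong : ∃ w ∈ L, 3 ≤ w.length
  · obtain ⟨w, hw, h3⟩ := hlong
    exact hasPalFact_add_two_of_three_le_length hL hw h3
  · push Not at hlong
    exact hasPalFact_of_forall_length_le_two hL (fun w hw => by have := hlong w hw; omega)
      (by omega) hk
end

section
/- The number of distinct minimal periods among the nonempty suffix-palindromes of a string of length n+1 is O(log n); more precisely, if consecutive series heads shrink by a factor of at least 3/2, the number of series is at most log_{3/2}(n+1) + 1. -/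
/-!
Two palindromic suffixes `u`, `v` of `s` with `|u| < |v|` are nested, and `u` is a border of `v`.
If moreover `|v| ≤ 3/2 |u|`, the minimal periods of `u` and `v` coincide (series-gap lemma).
So, picking one palindromic suffix for each minimal period, any two of the chosen lengths in
`[1, n + 1]` differ by a factor greater than `3/2`, and there are at most
`log_{3/2}(n + 1) + 1` of them.
-/

section Periods

variable {α : Type*}

lemma hasPeriod_length (w : List α) : HasPeriod w w.length :=
  fun _ h => absurd h (by omega)

lemma minPeriod_pos_and_hasPeriod {w : List α} (hw : w ≠ []) :
    0 < minPeriod w ∧ HasPeriod w (minPeriod w) :=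
  Nat.sInf_mem (s := {p | 0 < p ∧ HasPeriod w p})
    ⟨w.length, List.length_pos_iff.mpr hw, hasPeriod_length w⟩

lemma minPeriod_le {w : List α} {q : ℕ} (hq : 0 < q) (h : HasPeriod w q) : minPeriod w ≤ q :=
  Nat.sInf_le ⟨hq, h⟩

lemma HasPeriod.of_isPrefix {u v : List α} {p : ℕ} (hv : HasPeriod v p) (h : u <+: v) :
    HasPeriod u p := by
  obtain ⟨t, rfl⟩ := h
  intro i hi
  have := hv i (by simp only [List.length_append]; omega)
  rwa [List.getElem?_append_left (by omega), List.getElem?_append_left hi] at this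

lemma hasPeriod_length_sub_of_isPrefix_of_isSuffix {u v : List α} (hpre : u <+: v)
    (hsuf : u <:+ v) : HasPeriod v (v.length - u.length) := by
  obtain ⟨t, rfl⟩ := hsuf
  obtain ⟨r, hr⟩ := hpre
  intro i hi
  simp only [List.length_append, Nat.add_sub_cancel] at hi ⊢
  have hright : (t ++ u)[i + t.length]? = u[i]? := by
    rw [List.getElem?_append_right (by omega), Nat.add_sub_cancel]
  rw [hright, ← hr, List.getElem?_append_left (by omega)]

/-- A period `d` of a prefix `u` of `v` extends to all of `v` when `v` has a period `p`
with `p + d ≤ |u|`: every position of `v` is congruent mod `p` to one inside `u`. -/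
lemma HasPeriod.extend_of_isPrefix {u v : List α} {p d : ℕ} (hu : HasPeriod u d)
    (huv : u <+: v) (hv : HasPeriod v p) (hp : 0 < p) (hle : p + d ≤ u.length) :
    HasPeriod v d := by
  intro i
  induction i using Nat.strong_induction_on with
  | _ i ih =>
    intro hi
    by_cases hiu : i + d < u.length
    · obtain ⟨t, rfl⟩ := huv
      rw [List.getElem?_append_left (by omega), List.getElem?_append_left hiu]
      exact hu i hiu
    · have h1 := hv (i - p) (by omega)
      have h2 := hv (i - p + d) (by omega)
      rw [Nat.sub_add_cancel (by omega)] at h1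
      rw [show i - p + d + p = i + d by omega] at h2
      rw [← h1, ← h2]
      exact ih (i - p) (by omega) (by omega)

lemma List.IsSuffix.isPrefix_of_reverse_eq {u v : List α} (h : u <:+ v) (hu : u.reverse = u)
    (hv : v.reverse = v) : u <+: v := by
  simpa only [hu, hv] using List.reverse_prefix.mpr h

/-- `u` is a border of `v`, so `minPeriod v ≤ |v| - |u| ≤ |u| / 2`; then `minPeriod u` extends
from `u` to `v`. -/
lemma minPeriod_eq_of_isSuffix_of_reverse_eq {u v : List α} (huv : u <:+ v)
    (hu : u.reverse = u) (hv : v.reverse = v) (hgap : 2 * v.length ≤ 3 * u.length) :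
    minPeriod u = minPeriod v := by
  rcases huv.length_le.eq_or_lt with hlen | hlt
  · rw [huv.eq_of_length hlen]
  have hun : u ≠ [] := List.length_pos_iff.mp (by omega)
  have hupre := huv.isPrefix_of_reverse_eq hu hv
  have hq := hasPeriod_length_sub_of_isPrefix_of_isSuffix hupre huv
  have hvn : v ≠ [] := List.ne_nil_of_length_pos (by omega)
  obtain ⟨hp0, hp⟩ := minPeriod_pos_and_hasPeriod hvn
  obtain ⟨hr0, hr⟩ := minPeriod_pos_and_hasPeriod hun
  have hpq : minPeriod v ≤ v.length - u.length := minPeriod_le (by omega) hq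
  have hrp : minPeriod u ≤ minPeriod v := minPeriod_le hp0 (hp.of_isPrefix hupre)
  have hpr : minPeriod v ≤ minPeriod u :=
    minPeriod_le hr0 (hr.extend_of_isPrefix hupre hp hp0 (by omega))
  omega

end Periods

lemma exists_pow_card_sub_one_le {r : ℝ} (hr : 0 ≤ r) {G : Finset ℕ} (hG : G.Nonempty)
    (hpos : ∀ a ∈ G, 1 ≤ a) (hgap : ∀ a ∈ G, ∀ b ∈ G, a < b → r * a ≤ b) :
    ∃ a ∈ G, r ^ (G.card - 1) ≤ a := by
  induction G using Finset.induction_on_max with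
  | empty => exact absurd hG Finset.not_nonempty_empty
  | insert a s hlt ih =>
    refine ⟨a, Finset.mem_insert_self a s, ?_⟩
    rw [Finset.card_insert_of_notMem fun has => lt_irrefl a (hlt a has), Nat.add_sub_cancel]
    rcases s.eq_empty_or_nonempty with rfl | hs
    · simpa using hpos a (Finset.mem_insert_self a ∅)
    obtain ⟨b, hb, hrb⟩ := ih hs (fun x hx => hpos x (Finset.mem_insert_of_mem hx))
      fun x hx y hy => hgap x (Finset.mem_insert_of_mem hx) y (Finset.mem_insert_of_mem hy)
    calc r ^ s.card = r * r ^ (s.card - 1) := by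
          rw [← pow_succ', Nat.sub_add_cancel (Finset.card_pos.mpr hs)]
      _ ≤ r * b := by gcongr
      _ ≤ a := hgap b (Finset.mem_insert_of_mem hb) a (Finset.mem_insert_self a s) (hlt b hb)

lemma ncard_le_logb_add_one_of_gaps {r : ℝ} (hr : 1 < r) {G : Set ℕ} {N : ℕ}
    (hG : ∀ a ∈ G, 1 ≤ a ∧ a ≤ N) (hgap : ∀ a ∈ G, ∀ b ∈ G, a < b → r * a ≤ b) :
    (G.ncard : ℝ) ≤ Real.logb r N + 1 := by
  have hfin : G.Finite := (Set.finite_Iic N).subset fun a ha => (hG a ha).2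
  rcases G.eq_empty_or_nonempty with rfl | hne
  · rcases N.eq_zero_or_pos with rfl | hN
    · simp
    · have : 0 ≤ Real.logb r N := Real.logb_nonneg hr (by exact_mod_cast hN)
      simp only [Set.ncard_empty, Nat.cast_zero]
      linarith
  lift G to Finset ℕ using hfin
  obtain ⟨a, ha, hra⟩ := exists_pow_card_sub_one_le (by linarith) (by simpa using hne)
    (fun a ha => (hG a ha).1) hgap
  have hcard : 1 ≤ G.card := Finset.card_pos.mpr (by simpa using hne)
  have hpow : r ^ ((G.card : ℝ) - 1) ≤ N := by
    rw [← Nat.cast_one, ← Nat.cast_sub hcard, Real.rpow_natCast]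
    exact hra.trans (by exact_mod_cast (hG a ha).2)
  rw [Set.ncard_coe_finset]
  have hN : (0 : ℝ) < N := by exact_mod_cast (hG a ha).1.trans (hG a ha).2
  have := (Real.le_logb_iff_rpow_le hr hN).mpr hpow
  linarith

/-- the number of distinct minimal periods among nonempty suffix-palindromes of
a string of length `n + 1` (i.e. the number of series) is at most `log_{3/2}(n+1) + 1`. -/
theorem number_of_series_log {α : Type*} (s : List α) (n : ℕ) (hs : s.length = n + 1) :
    (({p : ℕ | ∃ u : List α, u <:+ s ∧ u ≠ [] ∧ u.reverse = u ∧ minPeriod u = p}.ncard : ℝ))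
      ≤ Real.logb (3 / 2) (n + 1) + 1 := by
  set S := {u : List α | u <:+ s ∧ u ≠ [] ∧ u.reverse = u}
  have hP : {p : ℕ | ∃ u : List α, u <:+ s ∧ u ≠ [] ∧ u.reverse = u ∧ minPeriod u = p} =
      minPeriod '' S := by
    ext p; simp [S, and_assoc]
  obtain ⟨T, hTS, hT⟩ := Set.exists_subset_bijOn S minPeriod
  have hlen : Set.InjOn List.length T := fun u hu v hv h =>
    (List.suffix_of_suffix_length_le (hTS hu).1 (hTS hv).1 h.le).eq_of_length h
  rw [hP, ← hT.image_eq, hT.injOn.ncard_image, ← hlen.ncard_image]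
  have := ncard_le_logb_add_one_of_gaps (r := 3 / 2) (G := List.length '' T) (N := n + 1)
    (by norm_num) ?_ ?_
  · simpa using this
  · rintro _ ⟨u, hu, rfl⟩
    exact ⟨List.length_pos_iff.mpr (hTS hu).2.1, hs ▸ (hTS hu).1.length_le⟩
  · rintro _ ⟨u, hu, rfl⟩ _ ⟨v, hv, rfl⟩ hlt
    by_contra! hclose
    have huv : u <:+ v := List.suffix_of_suffix_length_le (hTS hu).1 (hTS hv).1 hlt.le
    have := minPeriod_eq_of_isSuffix_of_reverse_eq huv (hTS hu).2.2 (hTS hv).2.2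
      (by exact_mod_cast (by linarith : (2 : ℝ) * v.length ≤ 3 * u.length))
    exact hlt.ne (congrArg List.length (hT.injOn hu hv this))
end

section
/- If s has minimal period p among suffix-palindromes forming a p-series with p = 1, then the series has the form {v^k, v^{k-1}, ..., v} for a single letter v, and this is the last series of s (the shortest nonempty suffix-palindrome of s is in it). -/
section

variable {α : Type*}

theorem hasPeriod_one_iff_isChain_eq {w : List α} : HasPeriod w 1 ↔ w.IsChain (· = ·) := by
  rw [List.isChain_iff_getElem]
  refine forall_congr' fun i => forall_congr' fun hi => ?_
  simp [List.getElem?_eq_getElem hi, List.getElem?_eq_getElem (Nat.lt_of_succ_lt hi)]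

theorem minPeriod_eq_one_iff_hasPeriod_one {w : List α} : minPeriod w = 1 ↔ HasPeriod w 1 := by
  refine ⟨fun h => ?_, fun h => ?_⟩
  · have hne : {p | 0 < p ∧ HasPeriod w p}.Nonempty := Nat.nonempty_of_sInf_eq_succ h
    exact h ▸ (Nat.sInf_mem hne).2
  · have h1 : 1 ∈ {p | 0 < p ∧ HasPeriod w p} := ⟨one_pos, h⟩
    exact le_antisymm (Nat.sInf_le h1) (Nat.sInf_mem ⟨1, h1⟩).1

theorem minPeriod_eq_one_iff {w : List α} :
    minPeriod w = 1 ↔ ∀ a ∈ w.head?, w = List.replicate w.length a := by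
  rw [minPeriod_eq_one_iff_hasPeriod_one, hasPeriod_one_iff_isChain_eq,
    List.isChain_eq_iff_eq_replicate]

theorem minPeriod_replicate {n : ℕ} {a : α} : minPeriod (List.replicate n a) = 1 :=
  minPeriod_eq_one_iff.2 fun c hc => by
    rw [List.head?_replicate] at hc
    split_ifs at hc
    · exact absurd hc (Option.not_mem_none c)
    · obtain rfl : a = c := Option.some_injective _ hc
      rw [List.length_replicate]

theorem mem_pSeries_one_iff {s w : List α} (hs : s ≠ []) :
    w ∈ pSeries s 1 ↔ w ≠ [] ∧ w <:+ s ∧ w = List.replicate w.length (s.getLast hs) := by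
  refine ⟨fun ⟨hsuf, hw, _, hper⟩ => ⟨hw, hsuf, ?_⟩,
    fun ⟨hw, hsuf, hrep⟩ => ⟨hsuf, hw, ?_, ?_⟩⟩
  · have hrep := minPeriod_eq_one_iff.1 hper _ (List.head?_eq_some_head hw)
    have hlast : s.getLast hs ∈ w := hsuf.getLast hw ▸ List.getLast_mem hw
    rwa [List.eq_replicate_iff.1 hrep |>.2 _ hlast]
  · exact hrep ▸ List.reverse_replicate
  · exact hrep ▸ minPeriod_replicate

theorem replicate_suffix_iff_le_sSup {s : List α} {a : α} {m : ℕ} :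
    List.replicate m a <:+ s ↔ m ≤ sSup {n | List.replicate n a <:+ s} := by
  have hbdd : BddAbove {n | List.replicate n a <:+ s} :=
    ⟨s.length, fun n hn => by simpa using hn.length_le⟩
  refine ⟨le_csSup hbdd, fun h => ?_⟩
  exact (List.suffix_replicate_iff.2 ⟨by simpa using h, by simp⟩).trans
    (Nat.sSup_mem ⟨0, by simp⟩ hbdd)

theorem pSeries_one_eq {s : List α} (hs : s ≠ []) :
    pSeries s 1 = {w | ∃ m, 1 ≤ m ∧ m ≤ sSup {n | List.replicate n (s.getLast hs) <:+ s} ∧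
      w = List.replicate m (s.getLast hs)} := by
  ext w
  rw [mem_pSeries_one_iff hs]
  constructor
  · rintro ⟨hw, hsuf, hrep⟩
    rw [hrep] at hsuf
    exact ⟨w.length, List.length_pos_iff.2 hw, replicate_suffix_iff_le_sSup.1 hsuf, hrep⟩
  · rintro ⟨m, hm, hmk, rfl⟩
    refine ⟨?_, replicate_suffix_iff_le_sSup.2 hmk, by rw [List.length_replicate]⟩
    rw [ne_eq, List.replicate_eq_nil_iff]
    omega

end

/-- if the `1`-series of `s` is nonempty, then it equals
`{v^k, v^{k-1}, ..., v}` for a single letter `v`, and it is the last series of `s`: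
the shortest nonempty suffix-palindrome of `s` belongs to it. -/
theorem one_series_structure {α : Type*} (s : List α) (hU : (pSeries s 1).Nonempty) :
    ∃ (a : α) (k : ℕ), 1 ≤ k ∧
      pSeries s 1 = {w | ∃ m : ℕ, 1 ≤ m ∧ m ≤ k ∧ w = List.replicate m a} ∧
      ∃ y ∈ pSeries s 1, ∀ z : List α, z <:+ s → z ≠ [] → z.reverse = z →
        y.length ≤ z.length := by
  obtain ⟨w, hw⟩ := hU
  have hs : s ≠ [] := hw.1.ne_nil hw.2.1
  rw [pSeries_one_eq hs] at hw ⊢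
  obtain ⟨m, hm, hmk, -⟩ := hw
  refine ⟨s.getLast hs, _, hm.trans hmk, rfl, List.replicate 1 (s.getLast hs),
    ⟨1, le_rfl, hm.trans hmk, rfl⟩, fun z _ hz _ => ?_⟩
  exact List.length_pos_iff.2 hz
end

section
/- For any string w, letters a and b, and j ∈ {0,1} with pl^j(w·a·b) finite, the value pl^j(w·a·b) belongs to the set { pl^{1-j}(w·a) + 1, pl^{1-j}(w·a) - 1, pl^{1-j}(w) + 1 } (with the arithmetic conventions that ∞ ± 1 = ∞). -/
/-!
Take an optimal factorization of `w·a·b` into `n` palindromes with `n ≡ j`, and look at its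
last factor `P`, a palindrome ending in `b`. If `P = b`, the remaining `n - 1` factors show
`pl^{1-j}(w·a) = n - 1`; if `P = bb`, then `a = b` and likewise `pl^{1-j}(w) = n - 1`. Otherwise
`P = b·u·b` with `u` a nonempty palindrome, and splitting `P` into `b` and `u` (dropping the final
`b`) factors `w·a` into `n + 1` palindromes. Since appending `b` always gives
`n ≤ pl^{1-j}(w·a) + 1`, parity leaves `pl^{1-j}(w·a) ∈ {n - 1, n + 1}`.
-/

section

variable {α : Type*}

theorem HasPalFact.eq_nil {s : List α} (h : HasPalFact s 0) : s = [] := by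
  obtain ⟨L, hlen, rfl, -⟩ := h
  simp [List.length_eq_zero_iff.mp hlen]

theorem HasPalFact.append_s13 {s p : List α} {k : ℕ} (h : HasPalFact s k) (hp : p ≠ [])
    (hpal : p.reverse = p) : HasPalFact (s ++ p) (k + 1) := by
  obtain ⟨L, rfl, rfl, hL⟩ := h
  refine ⟨L ++ [p], by simp, by simp, fun x hx => ?_⟩
  rcases List.mem_append.mp hx with hx | hx
  · exact hL x hx
  · rw [List.mem_singleton.mp hx]; exact ⟨hp, hpal⟩

theorem HasPalFact.exists_append_of_succ {s : List α} {k : ℕ} (h : HasPalFact s (k + 1)) :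
    ∃ t P, t ++ P = s ∧ P ≠ [] ∧ P.reverse = P ∧ HasPalFact t k := by
  obtain ⟨L, hlen, rfl, hL⟩ := h
  obtain ⟨L', P, rfl⟩ := (List.eq_nil_or_concat L).resolve_left (by rintro rfl; simp at hlen)
  have hP : P ∈ L'.concat P := by simp
  refine ⟨L'.flatten, P, by simp, (hL P hP).1, (hL P hP).2, L', by simpa using hlen, rfl,
    fun x hx => hL x (by simp [hx])⟩

/-- A nonempty palindromic suffix of `s ++ [b]` is either `[b]` or `b :: u ++ [b]` with `u`
a palindrome. -/
theorem eq_or_exists_of_append_palindrome_eq_concat {s t P : List α} {b : α}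
    (h : t ++ P = s ++ [b]) (hP : P ≠ []) (hpal : P.reverse = P) :
    t = s ∨ ∃ u, u.reverse = u ∧ t ++ b :: u = s := by
  obtain ⟨Q, c, rfl⟩ := (List.eq_nil_or_concat P).resolve_left hP
  rw [List.concat_eq_append, ← List.append_assoc] at h
  obtain ⟨htQ, hc⟩ := List.append_inj' h rfl
  obtain rfl : c = b := by simpa using hc
  rcases Q with _ | ⟨c, u⟩
  · exact Or.inl (by simpa using htQ)
  · simp only [List.concat_eq_append, List.cons_append, List.reverse_cons, List.reverse_append,
      List.reverse_nil, List.nil_append, List.cons.injEq] at hpal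
    obtain ⟨rfl, hu⟩ := hpal
    exact Or.inr ⟨u, List.append_cancel_right hu, htQ⟩

theorem plParity_le {j k : ℕ} {s : List α} (hk : k % 2 = j) (h : HasPalFact s k) :
    plParity j s ≤ k :=
  sInf_le ⟨k, rfl, hk, h⟩

theorem exists_plParity_eq {j : ℕ} {s : List α} (h : plParity j s ≠ ⊤) :
    ∃ k : ℕ, k % 2 = j ∧ HasPalFact s k ∧ plParity j s = k := by
  have hne : {n : ℕ∞ | ∃ k : ℕ, n = k ∧ k % 2 = j ∧ HasPalFact s k}.Nonempty := by
    rw [Set.nonempty_iff_ne_empty]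
    rintro hempty
    exact h (by rw [plParity, hempty, sInf_empty])
  obtain ⟨k, hk, hj, hf⟩ := csInf_mem hne
  exact ⟨k, hj, hf, hk⟩

theorem mod_two_eq_of_plParity_eq {j k : ℕ} {s : List α} (h : plParity j s = k) : k % 2 = j := by
  obtain ⟨n, hn, -, hsn⟩ :=
    exists_plParity_eq (h ▸ ENat.natCast_ne_top k : plParity j s ≠ ⊤)
  exact Nat.cast_injective (hsn.symm.trans h) ▸ hn

theorem plParity_append_palindrome_le {j : ℕ} (hj : j ≤ 1) (s : List α) {p : List α}
    (hp : p ≠ []) (hpal : p.reverse = p) :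
    plParity j (s ++ p) ≤ plParity (1 - j) s + 1 := by
  rcases eq_or_ne (plParity (1 - j) s) ⊤ with htop | htop
  · simp [htop]
  obtain ⟨k, hk, hf, heq⟩ := exists_plParity_eq htop
  rw [heq]
  exact_mod_cast plParity_le (by omega) (hf.append_s13 hp hpal)

theorem plParity_append_palindrome_eq {j k : ℕ} (hj : j ≤ 1) {s p : List α} (hp : p ≠ [])
    (hpal : p.reverse = p) (hs : HasPalFact s k) (hN : plParity j (s ++ p) = (k + 1 : ℕ)) :
    plParity j (s ++ p) = plParity (1 - j) s + 1 := by
  have hk := mod_two_eq_of_plParity_eq hN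
  refine le_antisymm (plParity_append_palindrome_le hj s hp hpal) ?_
  rw [hN, Nat.cast_add_one]
  gcongr
  exact plParity_le (by omega) hs

theorem plParity_append_singleton_eq_or {j k : ℕ} (hj : j ≤ 1) {s : List α} (b : α)
    (hs : HasPalFact s (k + 2)) (hN : plParity j (s ++ [b]) = (k + 1 : ℕ)) :
    plParity j (s ++ [b]) = plParity (1 - j) s + 1 ∨
    plParity j (s ++ [b]) = plParity (1 - j) s - 1 := by
  have hk := mod_two_eq_of_plParity_eq hN
  have hle : plParity (1 - j) s ≤ (k + 2 : ℕ) := plParity_le (by omega) hs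
  obtain ⟨m, hm, -, hAm⟩ := exists_plParity_eq (ne_top_of_le_ne_top (ENat.natCast_ne_top _) hle)
  have hge := plParity_append_palindrome_le hj s (p := [b]) (by simp) rfl
  rw [hN, hAm] at hge ⊢
  rw [hAm] at hle
  norm_cast at hge hle
  rcases (by omega : m = k ∨ m = k + 2) with rfl | rfl
  · exact Or.inl rfl
  · exact Or.inr (by norm_cast)

end

/-- three-case lemma for even/odd palindromic length: if `pl^j(w·a·b)` is
finite, then it equals `pl^{1-j}(w·a) + 1`, `pl^{1-j}(w·a) - 1`, or `pl^{1-j}(w) + 1`. -/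
theorem plParity_append_two {α : Type*} (w : List α) (a b : α) (j : ℕ)
    (hj : j = 0 ∨ j = 1) (hfin : plParity j (w ++ [a, b]) ≠ ⊤) :
    plParity j (w ++ [a, b]) = plParity (1 - j) (w ++ [a]) + 1 ∨
    plParity j (w ++ [a, b]) = plParity (1 - j) (w ++ [a]) - 1 ∨
    plParity j (w ++ [a, b]) = plParity (1 - j) w + 1 := by
  replace hj : j ≤ 1 := by omega
  obtain ⟨n, -, hfact, hN⟩ := exists_plParity_eq hfin
  obtain ⟨k, rfl⟩ : ∃ k, n = k + 1 :=
    Nat.exists_eq_succ_of_ne_zero (by rintro rfl; simpa using hfact.eq_nil)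
  obtain ⟨t, P, hsplit, hP, hPpal, ht⟩ := hfact.exists_append_of_succ
  have hwab : w ++ [a, b] = w ++ [a] ++ [b] := by simp
  rw [hwab] at hN hsplit ⊢
  rcases eq_or_exists_of_append_palindrome_eq_concat hsplit hP hPpal with rfl | ⟨u, hu, htu⟩
  · exact Or.inl (plParity_append_palindrome_eq hj (by simp) rfl ht hN)
  rcases eq_or_ne u [] with rfl | hu0
  · obtain ⟨rfl, hab⟩ := List.append_inj' htu rfl
    obtain rfl : a = b := by simpa using hab.symm
    rw [← hwab] at hN ⊢
    exact Or.inr (Or.inr (plParity_append_palindrome_eq hj (p := [a, a]) (by simp) rfl ht hN))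
  · have hA : HasPalFact (w ++ [a]) (k + 2) := by
      simpa [← htu] using (ht.append_s13 (p := [b]) (by simp) rfl).append_s13 hu0 hu
    exact (plParity_append_singleton_eq_or hj b hA hN).imp_right Or.inl
end
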